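/- arXiv:2109.10549 — 5 statements merged into one kernel-verified Lean document; each statement's English description precedes it below -/
import Mathlib

section
/- The 2-domination number of the cylinder C₃ □ P_m equals m + 2 for every m ≥ 4, and moreover γ₂(C₃ □ P₂) = 3 and γ₂(C₃ □ P₃) = 4. -/
open SimpleGraph

/-- `S` is a 2-dominating set of `G`: every vertex not in `S` has at least two neighbors in `S`. -/
def TwoDomSet {V : Type*} (G : SimpleGraph V) (S : Set V) : Prop :=
  ∀ v ∉ S, 2 ≤ (S ∩ G.neighborSet v).ncard

/-- The 2-domination number of `G`. -/
noncomputable def gamma2 {V : Type*} (G : SimpleGraph V) : ℕ :=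
  sInf {k | ∃ S : Set V, TwoDomSet G S ∧ S.ncard = k}

/-- The cylinder `C_n □ P_m`. -/
def cylinder (n m : ℕ) : SimpleGraph (Fin n × Fin m) :=
  (cycleGraph n) □ (pathGraph m)

def i01 (p : Prop) [Decidable p] : ℕ := if p then 1 else 0

lemma i01_congr {p q : Prop} [Decidable p] [Decidable q] (h : p ↔ q) : i01 p = i01 q := by
  simp [i01]; split_ifs with h1 h2 <;> tauto

lemma cyl_adj {m : ℕ} {x y : Fin 3 × Fin m} :
    (cylinder 3 m).Adj x y ↔
      (x.2 = y.2 ∧ x.1 ≠ y.1) ∨ (x.1 = y.1 ∧ (x.2.val + 1 = y.2.val ∨ y.2.val + 1 = x.2.val)) := by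
  show ((cycleGraph 3) □ (pathGraph m)).Adj x y ↔ _
  rw [boxProd_adj, cycleGraph_three_eq_top, pathGraph_adj, top_adj]
  tauto

lemma fin3_cover : ∀ i i' : Fin 3, i' ≠ i → i' = i + 1 ∨ i' = i + 2 := by decide
lemma fin3_ne : ∀ i : Fin 3, i + 1 ≠ i ∧ i + 2 ≠ i ∧ i + 1 ≠ i + 2 := by decide

lemma ncard_inter_singleton {α : Type*} (S : Set α) (p : α) [Decidable (p ∈ S)] :
    (S ∩ {p}).ncard = i01 (p ∈ S) := by
  unfold i01; split_ifs with h
  · rw [Set.inter_eq_right.mpr (Set.singleton_subset_iff.mpr h), Set.ncard_singleton]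
  · rw [show S ∩ {p} = ∅ by ext x; simp; rintro hx rfl; exact h hx]; simp

lemma ncard_inter_insert {α : Type*} (S : Set α) (p : α) (t : Set α) [Decidable (p ∈ S)]
    (hp : p ∉ t) (ht : t.Finite) :
    (S ∩ insert p t).ncard = i01 (p ∈ S) + (S ∩ t).ncard := by
  unfold i01; split_ifs with h
  · rw [show S ∩ insert p t = insert p (S ∩ t) by
      ext x
      simp only [Set.mem_inter_iff, Set.mem_insert_iff]
      constructor
      · rintro ⟨hx, rfl | hxt⟩
        · exact Or.inl rfl
        · exact Or.inr ⟨hx, hxt⟩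
      · rintro (rfl | ⟨hx, hxt⟩)
        · exact ⟨h, Or.inl rfl⟩
        · exact ⟨hx, Or.inr hxt⟩]
    rw [Set.ncard_insert_of_notMem (fun hx => hp hx.2) (ht.inter_of_right S)]
    omega
  · rw [show S ∩ insert p t = S ∩ t by
      ext x
      simp only [Set.mem_inter_iff, Set.mem_insert_iff]
      constructor
      · rintro ⟨hx, rfl | hxt⟩
        · exact absurd hx h
        · exact ⟨hx, hxt⟩
      · rintro ⟨hx, hxt⟩
        exact ⟨hx, Or.inr hxt⟩]
    omega

lemma nbhd_left {m : ℕ} (h1 : 1 < m) (i : Fin 3) (j : Fin m) (hj : j.val = 0) :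
    (cylinder 3 m).neighborSet (i, j) =
      insert (i+1, j) (insert (i+2, j) {(i, (⟨1, h1⟩ : Fin m))}) := by
  ext ⟨i', j'⟩
  simp only [mem_neighborSet, cyl_adj, Set.mem_insert_iff, Set.mem_singleton_iff, Prod.mk.injEq]
  constructor
  · rintro (⟨h2, h3⟩ | ⟨h2, h3 | h3⟩)
    · rcases fin3_cover i i' (Ne.symm h3) with h4 | h4
      · exact Or.inl ⟨h4, h2.symm⟩
      · exact Or.inr (Or.inl ⟨h4, h2.symm⟩)
    · exact Or.inr (Or.inr ⟨h2.symm, Fin.ext (by simp only [Fin.val_mk]; omega)⟩)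
    · omega
  · have := fin3_ne i
    rintro (⟨rfl, rfl⟩ | ⟨rfl, rfl⟩ | ⟨rfl, rfl⟩)
    · exact Or.inl ⟨rfl, by tauto⟩
    · exact Or.inl ⟨rfl, by tauto⟩
    · exact Or.inr ⟨rfl, Or.inl (by simp only [Fin.val_mk]; omega)⟩

lemma nbhd_right {m : ℕ} (h1 : 1 < m) (i : Fin 3) (j : Fin m) (hj : j.val = m - 1) :
    (cylinder 3 m).neighborSet (i, j) =
      insert (i+1, j) (insert (i+2, j) {(i, (⟨m-2, by omega⟩ : Fin m))}) := by
  ext ⟨i', j'⟩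
  simp only [mem_neighborSet, cyl_adj, Set.mem_insert_iff, Set.mem_singleton_iff, Prod.mk.injEq]
  constructor
  · rintro (⟨h2, h3⟩ | ⟨h2, h3 | h3⟩)
    · rcases fin3_cover i i' (Ne.symm h3) with h4 | h4
      · exact Or.inl ⟨h4, h2.symm⟩
      · exact Or.inr (Or.inl ⟨h4, h2.symm⟩)
    · have := j'.isLt; omega
    · exact Or.inr (Or.inr ⟨h2.symm, Fin.ext (by simp only [Fin.val_mk]; omega)⟩)
  · have := fin3_ne i
    rintro (⟨rfl, rfl⟩ | ⟨rfl, rfl⟩ | ⟨rfl, rfl⟩)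
    · exact Or.inl ⟨rfl, by tauto⟩
    · exact Or.inl ⟨rfl, by tauto⟩
    · exact Or.inr ⟨rfl, Or.inr (by simp only [Fin.val_mk]; omega)⟩

lemma nbhd_mid {m : ℕ} (i : Fin 3) (j : Fin m) (hj1 : 1 ≤ j.val) (hj2 : j.val + 1 < m) :
    (cylinder 3 m).neighborSet (i, j) =
      insert (i+1, j) (insert (i+2, j)
        (insert (i, (⟨j.val - 1, by omega⟩ : Fin m)) {(i, (⟨j.val + 1, hj2⟩ : Fin m))})) := by
  ext ⟨i', j'⟩
  simp only [mem_neighborSet, cyl_adj, Set.mem_insert_iff, Set.mem_singleton_iff, Prod.mk.injEq]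
  constructor
  · rintro (⟨h2, h3⟩ | ⟨h2, h3 | h3⟩)
    · rcases fin3_cover i i' (Ne.symm h3) with h4 | h4
      · exact Or.inl ⟨h4, h2.symm⟩
      · exact Or.inr (Or.inl ⟨h4, h2.symm⟩)
    · exact Or.inr (Or.inr (Or.inr ⟨h2.symm, Fin.ext (by simp only [Fin.val_mk]; omega)⟩))
    · exact Or.inr (Or.inr (Or.inl ⟨h2.symm, Fin.ext (by simp only [Fin.val_mk]; omega)⟩))
  · have := fin3_ne i
    rintro (⟨rfl, rfl⟩ | ⟨rfl, rfl⟩ | ⟨rfl, rfl⟩ | ⟨rfl, rfl⟩)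
    · exact Or.inl ⟨rfl, by tauto⟩
    · exact Or.inl ⟨rfl, by tauto⟩
    · exact Or.inr ⟨rfl, Or.inr (by simp only [Fin.val_mk]; try omega)⟩
    · exact Or.inr ⟨rfl, Or.inl (by simp only [Fin.val_mk]; try omega)⟩

open scoped Classical in
noncomputable def colS {m : ℕ} (S : Set (Fin 3 × Fin m)) (j : ℕ) : Finset (Fin 3) :=
  if h : j < m then Finset.univ.filter (fun i => (i, (⟨j, h⟩ : Fin m)) ∈ S) else ∅

lemma mem_colS {m : ℕ} (S : Set (Fin 3 × Fin m)) {j : ℕ} (h : j < m) (i : Fin 3) :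
    i ∈ colS S j ↔ (i, (⟨j, h⟩ : Fin m)) ∈ S := by
  simp [colS, h]

def leftOK (a0 a1 : Finset (Fin 3)) : Prop :=
  ∀ i : Fin 3, i ∉ a0 → 2 ≤ i01 (i+1 ∈ a0) + i01 (i+2 ∈ a0) + i01 (i ∈ a1)

def midOK (A B C : Finset (Fin 3)) : Prop :=
  ∀ i : Fin 3, i ∉ B → 2 ≤ i01 (i+1 ∈ B) + i01 (i+2 ∈ B) + i01 (i ∈ A) + i01 (i ∈ C)

def rightOK (B C : Finset (Fin 3)) : Prop :=
  ∀ i : Fin 3, i ∉ C → 2 ≤ i01 (i+1 ∈ C) + i01 (i+2 ∈ C) + i01 (i ∈ B)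

instance (a0 a1 : Finset (Fin 3)) : Decidable (leftOK a0 a1) := by unfold leftOK; infer_instance
instance (A B C : Finset (Fin 3)) : Decidable (midOK A B C) := by unfold midOK; infer_instance
instance (a0 a1 : Finset (Fin 3)) : Decidable (rightOK a0 a1) := by unfold rightOK; infer_instance

def ValidSeq (m : ℕ) (a : ℕ → Finset (Fin 3)) : Prop :=
  leftOK (a 0) (a 1) ∧ (∀ j, j + 2 < m → midOK (a j) (a (j+1)) (a (j+2))) ∧
    rightOK (a (m-2)) (a (m-1))

lemma pair_ne_fst {α β : Type*} {a b : α} {x y : β} (h : a ≠ b) : (a,x) ≠ (b,y) :=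
  fun hc => h (congrArg Prod.fst hc)
lemma pair_ne_snd {α β : Type*} {a b : α} {x y : β} (h : x ≠ y) : (a,x) ≠ (b,y) :=
  fun hc => h (congrArg Prod.snd hc)

lemma count_left {m : ℕ} (h1 : 1 < m) (S : Set (Fin 3 × Fin m)) (i : Fin 3) (j : Fin m)
    (hj : j.val = 0) :
    (S ∩ (cylinder 3 m).neighborSet (i, j)).ncard =
      i01 (i+1 ∈ colS S 0) + i01 (i+2 ∈ colS S 0) + i01 (i ∈ colS S 1) := by
  classical
  have hne := fin3_ne i
  obtain ⟨jv, hlt⟩ := j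
  have hj0 : jv = 0 := hj
  subst hj0
  have hz : ((⟨0, hlt⟩ : Fin m)) ≠ ⟨1, h1⟩ := fun h => by simpa using congrArg Fin.val h
  have n1 : (i+1, (⟨0, hlt⟩ : Fin m)) ∉ (insert (i+2, (⟨0, hlt⟩ : Fin m)) {(i, (⟨1, h1⟩ : Fin m))} : Set _) := by
    intro hm
    simp only [Set.mem_insert_iff, Set.mem_singleton_iff] at hm
    rcases hm with h | h
    · exact pair_ne_fst hne.2.2 h
    · exact pair_ne_fst hne.1 h
  have n2 : (i+2, (⟨0, hlt⟩ : Fin m)) ∉ ({(i, (⟨1, h1⟩ : Fin m))} : Set _) := by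
    intro hm
    simp only [Set.mem_singleton_iff] at hm
    exact pair_ne_snd hz hm
  rw [nbhd_left h1 i _ rfl, ncard_inter_insert S _ _ n1 (Set.toFinite _),
    ncard_inter_insert S _ _ n2 (Set.toFinite _), ncard_inter_singleton]
  have e1 : i01 ((i+1, (⟨0, hlt⟩ : Fin m)) ∈ S) = i01 (i+1 ∈ colS S 0) :=
    i01_congr ((mem_colS S hlt _).symm)
  have e2 : i01 ((i+2, (⟨0, hlt⟩ : Fin m)) ∈ S) = i01 (i+2 ∈ colS S 0) :=
    i01_congr ((mem_colS S hlt _).symm)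
  have e3 : i01 ((i, (⟨1, h1⟩ : Fin m)) ∈ S) = i01 (i ∈ colS S 1) :=
    i01_congr ((mem_colS S h1 _).symm)
  rw [e1, e2, e3]
  omega

lemma count_right {m : ℕ} (h1 : 1 < m) (S : Set (Fin 3 × Fin m)) (i : Fin 3) (j : Fin m)
    (hj : j.val = m - 1) :
    (S ∩ (cylinder 3 m).neighborSet (i, j)).ncard =
      i01 (i+1 ∈ colS S (m-1)) + i01 (i+2 ∈ colS S (m-1)) + i01 (i ∈ colS S (m-2)) := by
  classical
  have hne := fin3_ne i
  obtain ⟨jv, hlt⟩ := j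
  have hj0 : jv = m - 1 := hj
  subst hj0
  have hm2 : m - 2 < m := by omega
  have hz : ((⟨m-1, hlt⟩ : Fin m)) ≠ ⟨m-2, hm2⟩ := fun h => by
    have := congrArg Fin.val h
    simp only [Fin.val_mk] at this
    omega
  have n1 : (i+1, (⟨m-1, hlt⟩ : Fin m)) ∉
      (insert (i+2, (⟨m-1, hlt⟩ : Fin m)) {(i, (⟨m-2, hm2⟩ : Fin m))} : Set _) := by
    intro hm
    simp only [Set.mem_insert_iff, Set.mem_singleton_iff] at hm
    rcases hm with h | h
    · exact pair_ne_fst hne.2.2 h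
    · exact pair_ne_fst hne.1 h
  have n2 : (i+2, (⟨m-1, hlt⟩ : Fin m)) ∉ ({(i, (⟨m-2, hm2⟩ : Fin m))} : Set _) := by
    intro hm
    simp only [Set.mem_singleton_iff] at hm
    exact pair_ne_snd hz hm
  rw [nbhd_right h1 i _ rfl, ncard_inter_insert S _ _ n1 (Set.toFinite _),
    ncard_inter_insert S _ _ n2 (Set.toFinite _), ncard_inter_singleton]
  have e1 : i01 ((i+1, (⟨m-1, hlt⟩ : Fin m)) ∈ S) = i01 (i+1 ∈ colS S (m-1)) :=
    i01_congr ((mem_colS S hlt _).symm)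
  have e2 : i01 ((i+2, (⟨m-1, hlt⟩ : Fin m)) ∈ S) = i01 (i+2 ∈ colS S (m-1)) :=
    i01_congr ((mem_colS S hlt _).symm)
  have e3 : i01 ((i, (⟨m-2, hm2⟩ : Fin m)) ∈ S) = i01 (i ∈ colS S (m-2)) :=
    i01_congr ((mem_colS S hm2 _).symm)
  rw [e1, e2, e3]
  omega

lemma count_mid {m : ℕ} (S : Set (Fin 3 × Fin m)) (i : Fin 3) (j : Fin m)
    (hj1 : 1 ≤ j.val) (hj2 : j.val + 1 < m) :
    (S ∩ (cylinder 3 m).neighborSet (i, j)).ncard =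
      i01 (i+1 ∈ colS S j.val) + i01 (i+2 ∈ colS S j.val) + i01 (i ∈ colS S (j.val-1)) +
        i01 (i ∈ colS S (j.val+1)) := by
  classical
  have hne := fin3_ne i
  have hjm : j.val - 1 < m := by omega
  have hza : ((⟨j.val - 1, hjm⟩ : Fin m)) ≠ ⟨j.val + 1, hj2⟩ := fun h => by
    have := congrArg Fin.val h
    simp only [Fin.val_mk] at this
    omega
  have hzb : j ≠ (⟨j.val - 1, hjm⟩ : Fin m) := fun h => by
    have := congrArg Fin.val h
    simp only [Fin.val_mk] at this
    omega
  have hzc : j ≠ (⟨j.val + 1, hj2⟩ : Fin m) := fun h => by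
    have := congrArg Fin.val h
    simp only [Fin.val_mk] at this
    omega
  have n1 : (i+1, j) ∉ (insert (i+2, j)
      (insert (i, (⟨j.val - 1, hjm⟩ : Fin m)) {(i, (⟨j.val + 1, hj2⟩ : Fin m))}) : Set _) := by
    intro hm
    simp only [Set.mem_insert_iff, Set.mem_singleton_iff] at hm
    rcases hm with h | h | h
    · exact pair_ne_fst hne.2.2 h
    · exact pair_ne_fst hne.1 h
    · exact pair_ne_fst hne.1 h
  have n2 : (i+2, j) ∉
      (insert (i, (⟨j.val - 1, hjm⟩ : Fin m)) {(i, (⟨j.val + 1, hj2⟩ : Fin m))} : Set _) := by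
    intro hm
    simp only [Set.mem_insert_iff, Set.mem_singleton_iff] at hm
    rcases hm with h | h
    · exact pair_ne_fst hne.2.1 h
    · exact pair_ne_fst hne.2.1 h
  have n3 : (i, (⟨j.val - 1, hjm⟩ : Fin m)) ∉ ({(i, (⟨j.val + 1, hj2⟩ : Fin m))} : Set _) := by
    intro hm
    simp only [Set.mem_singleton_iff] at hm
    exact pair_ne_snd hza hm
  rw [nbhd_mid i j hj1 hj2, ncard_inter_insert S _ _ n1 (Set.toFinite _),
    ncard_inter_insert S _ _ n2 (Set.toFinite _),
    ncard_inter_insert S _ _ n3 (Set.toFinite _), ncard_inter_singleton]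
  have e1 : i01 ((i+1, j) ∈ S) = i01 (i+1 ∈ colS S j.val) := by
    refine i01_congr ?_
    rw [(mem_colS S j.isLt (i+1))]
  have e2 : i01 ((i+2, j) ∈ S) = i01 (i+2 ∈ colS S j.val) := by
    refine i01_congr ?_
    rw [(mem_colS S j.isLt (i+2))]
  have e3 : i01 ((i, (⟨j.val - 1, hjm⟩ : Fin m)) ∈ S) = i01 (i ∈ colS S (j.val-1)) :=
    i01_congr ((mem_colS S hjm _).symm)
  have e4 : i01 ((i, (⟨j.val + 1, hj2⟩ : Fin m)) ∈ S) = i01 (i ∈ colS S (j.val+1)) :=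
    i01_congr ((mem_colS S hj2 _).symm)
  rw [e1, e2, e3, e4]
  omega

lemma twoDom_iff {m : ℕ} (hm : 2 ≤ m) (S : Set (Fin 3 × Fin m)) :
    TwoDomSet (cylinder 3 m) S ↔ ValidSeq m (colS S) := by
  have h1 : 1 < m := hm
  constructor
  · intro hS
    refine ⟨?_, ?_, ?_⟩
    · intro i hi
      have h0 : (0:ℕ) < m := by omega
      have hv : (i, (⟨0, h0⟩ : Fin m)) ∉ S := fun h => hi ((mem_colS S h0 i).mpr h)
      have h2 := hS _ hv
      rwa [count_left h1 S i _ rfl] at h2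
    · intro j hj i hi
      have hlt : j + 1 < m := by omega
      have hv : (i, (⟨j+1, hlt⟩ : Fin m)) ∉ S := fun h => hi ((mem_colS S hlt i).mpr h)
      have h2 := hS _ hv
      rw [count_mid S i ⟨j+1, hlt⟩ (by simp) (by simp; omega)] at h2
      simp only [Fin.val_mk, Nat.add_sub_cancel] at h2
      exact h2
    · intro i hi
      have hml : m - 1 < m := by omega
      have hv : (i, (⟨m-1, hml⟩ : Fin m)) ∉ S := fun h => hi ((mem_colS S hml i).mpr h)
      have h2 := hS _ hv
      rwa [count_right h1 S i _ rfl] at h2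
  · rintro ⟨hL, hM, hR⟩ ⟨i, j⟩ hnot
    by_cases hj0 : j.val = 0
    · rw [count_left h1 S i j hj0]
      refine hL i fun h => hnot ?_
      have := (mem_colS S (by omega : (0:ℕ) < m) i).mp h
      rwa [show (⟨0, by omega⟩ : Fin m) = j from Fin.ext (by simp [hj0])] at this
    · by_cases hjl : j.val = m - 1
      · rw [count_right h1 S i j hjl]
        refine hR i fun h => hnot ?_
        have := (mem_colS S (by omega : m - 1 < m) i).mp h
        rwa [show (⟨m-1, by omega⟩ : Fin m) = j from Fin.ext (by simp [hjl])] at this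
      · have hb1 : 1 ≤ j.val := by omega
        have hb2 : j.val + 1 < m := by have := j.isLt; omega
        rw [count_mid S i j hb1 hb2]
        have hmid := hM (j.val - 1) (by omega)
        have e1 : j.val - 1 + 1 = j.val := by omega
        have e2 : j.val - 1 + 2 = j.val + 1 := by omega
        rw [e1, e2] at hmid
        refine hmid i fun h => hnot ?_
        have := (mem_colS S j.isLt i).mp h
        rwa [show (⟨j.val, j.isLt⟩ : Fin m) = j from Fin.ext rfl] at this

lemma ncard_eq_sum_colS {m : ℕ} (S : Set (Fin 3 × Fin m)) :
    S.ncard = ∑ j ∈ Finset.range m, (colS S j).card := by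
  classical
  rw [Set.ncard_eq_toFinset_card S (Set.toFinite S)]
  rw [Finset.card_eq_sum_card_fiberwise
    (f := Prod.snd) (t := Finset.univ) (fun x _ => Finset.mem_univ x.2)]
  rw [← Fin.sum_univ_eq_sum_range (fun j => (colS S j).card) m]
  refine Finset.sum_congr rfl fun j _ => ?_
  refine Finset.card_bij' (fun p _ => p.1) (fun i _ => (i, j)) ?_ ?_ ?_ ?_
  · intro p hp
    simp only [Finset.mem_filter, Set.Finite.mem_toFinset] at hp
    rw [mem_colS S j.isLt]
    have : (⟨j.val, j.isLt⟩ : Fin m) = j := Fin.ext rfl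
    rw [this, show (p.1, j) = p from by rw [← hp.2]]
    exact hp.1
  · intro i hi
    simp only [Finset.mem_filter, Set.Finite.mem_toFinset]
    rw [mem_colS S j.isLt] at hi
    have : (⟨j.val, j.isLt⟩ : Fin m) = j := Fin.ext rfl
    rw [this] at hi
    exact ⟨hi, trivial⟩
  · intro p hp
    simp only [Finset.mem_filter, Set.Finite.mem_toFinset] at hp
    exact Prod.ext rfl hp.2.symm
  · intro i hi
    rfl

def msk (s : Finset (Fin 3)) : ℕ := i01 (0 ∈ s) + 2 * i01 (1 ∈ s) + 4 * i01 (2 ∈ s)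

def tbl : List ℕ :=
  [100,100,100,100,100,100,100,3,
   0,1,1,2,1,2,2,3,
   0,1,1,2,1,2,2,3,
   1,2,2,3,2,3,3,4,
   0,1,1,2,1,2,2,3,
   1,2,2,3,2,3,3,4,
   1,2,2,3,2,3,3,4,
   2,3,3,4,3,4,4,5]

def phi (B C : Finset (Fin 3)) : ℕ := tbl.getD (8 * msk B + msk C) 0

theorem phi_base : ∀ a0 a1 a2 a3 : Finset (Fin 3), leftOK a0 a1 → midOK a0 a1 a2 →
    midOK a1 a2 a3 → 4 + phi a2 a3 ≤ a0.card + a1.card + a2.card + a3.card := by decide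

theorem phi_step : ∀ A B C : Finset (Fin 3), midOK A B C →
    phi B C + 1 ≤ phi A B + C.card := by decide

theorem phi_fin : ∀ B C : Finset (Fin 3), rightOK B C → 2 ≤ phi B C := by decide

theorem lb2' : ∀ a0 a1 : Finset (Fin 3), leftOK a0 a1 → rightOK a0 a1 →
    3 ≤ a0.card + a1.card := by decide

theorem lb3' : ∀ a0 a1 a2 : Finset (Fin 3), leftOK a0 a1 → midOK a0 a1 a2 → rightOK a1 a2 →
    4 ≤ a0.card + a1.card + a2.card := by decide

lemma seq_lb {m : ℕ} (hm : 4 ≤ m) (a : ℕ → Finset (Fin 3)) (h : ValidSeq m a) :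
    m + 2 ≤ ∑ j ∈ Finset.range m, (a j).card := by
  obtain ⟨hL, hM, hR⟩ := h
  have key : ∀ k, 4 ≤ k → k ≤ m →
      k + phi (a (k-2)) (a (k-1)) ≤ ∑ j ∈ Finset.range k, (a j).card := by
    intro k hk4
    induction k, hk4 using Nat.le_induction with
    | base =>
      intro hkm
      have hb := phi_base (a 0) (a 1) (a 2) (a 3) hL (hM 0 (by omega)) (hM 1 (by omega))
      simp only [Finset.sum_range_succ, Finset.sum_range_zero]
      norm_num
      omega
    | succ n hn ih =>
      intro hnm
      have h1 := ih (by omega)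
      have hmid := hM (n-2) (by omega)
      have e1 : n - 2 + 1 = n - 1 := by omega
      have e2 : n - 2 + 2 = n := by omega
      rw [e1, e2] at hmid
      have h2 := phi_step (a (n-2)) (a (n-1)) (a n) hmid
      have e3 : n + 1 - 2 = n - 1 := by omega
      have e4 : n + 1 - 1 = n := by omega
      rw [e3, e4, Finset.sum_range_succ]
      omega
  have h1 := key m hm le_rfl
  have h2 := phi_fin _ _ hR
  omega

def liftSet (m : ℕ) (a : ℕ → Finset (Fin 3)) : Set (Fin 3 × Fin m) := {p | p.1 ∈ a p.2.val}

lemma colS_lift (m : ℕ) (a : ℕ → Finset (Fin 3)) {j : ℕ} (h : j < m) :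
    colS (liftSet m a) j = a j := by
  ext i
  rw [mem_colS _ h]
  exact Iff.rfl

lemma valid_lift {m : ℕ} (hm : 2 ≤ m) {a : ℕ → Finset (Fin 3)} (h : ValidSeq m a) :
    ValidSeq m (colS (liftSet m a)) := by
  obtain ⟨hL, hM, hR⟩ := h
  refine ⟨?_, ?_, ?_⟩
  · rw [colS_lift m a (by omega : (0:ℕ) < m), colS_lift m a (by omega : (1:ℕ) < m)]
    exact hL
  · intro j hj
    rw [colS_lift m a (by omega : j < m), colS_lift m a (by omega : j+1 < m),
      colS_lift m a hj]
    exact hM j hj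
  · rw [colS_lift m a (by omega : m-2 < m), colS_lift m a (by omega : m-1 < m)]
    exact hR

lemma gamma2_eq {m g : ℕ} (hm : 2 ≤ m) (a : ℕ → Finset (Fin 3)) (ha : ValidSeq m a)
    (hsum : ∑ j ∈ Finset.range m, (a j).card = g)
    (hlb : ∀ b : ℕ → Finset (Fin 3), ValidSeq m b → g ≤ ∑ j ∈ Finset.range m, (b j).card) :
    gamma2 (cylinder 3 m) = g := by
  have hmem : g ∈ {k | ∃ S : Set (Fin 3 × Fin m), TwoDomSet (cylinder 3 m) S ∧ S.ncard = k} := by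
    refine ⟨liftSet m a, (twoDom_iff hm _).mpr (valid_lift hm ha), ?_⟩
    rw [ncard_eq_sum_colS, ← hsum]
    exact Finset.sum_congr rfl fun j hj =>
      by rw [colS_lift m a (Finset.mem_range.mp hj)]
  apply le_antisymm
  · exact Nat.sInf_le hmem
  · refine le_csInf ⟨g, hmem⟩ ?_
    rintro k ⟨S, hS, rfl⟩
    rw [ncard_eq_sum_colS]
    exact hlb _ ((twoDom_iff hm S).mp hS)

def f3 (j : ℕ) : Fin 3 := ⟨j % 3, Nat.mod_lt _ (by norm_num)⟩

lemma f3_eq {a b : ℕ} (h : a % 3 = b % 3) : f3 a = f3 b := Fin.ext h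

lemma i01_le {p q : Prop} [Decidable p] [Decidable q] (h : p → q) : i01 p ≤ i01 q := by
  unfold i01
  split_ifs with h1 h2 <;> simp_all

lemma midOK_mono {A A' B C C' : Finset (Fin 3)} (hA : A ⊆ A') (hC : C ⊆ C')
    (h : midOK A B C) : midOK A' B C' := by
  intro i hi
  have h1 := h i hi
  have h2 : i01 (i ∈ A) ≤ i01 (i ∈ A') := i01_le (fun hh => hA hh)
  have h3 : i01 (i ∈ C) ≤ i01 (i ∈ C') := i01_le (fun hh => hC hh)
  omega

lemma mid_aux (j : ℕ) : midOK {f3 j} {f3 (j+1)} {f3 (j+2)} := by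
  have e0 : f3 j = f3 (j % 3) := f3_eq (by omega)
  have e1 : f3 (j+1) = f3 (j % 3 + 1) := f3_eq (by omega)
  have e2 : f3 (j+2) = f3 (j % 3 + 2) := f3_eq (by omega)
  rw [e0, e1, e2]
  rcases (by omega : j % 3 = 0 ∨ j % 3 = 1 ∨ j % 3 = 2) with h | h | h <;> rw [h] <;> decide

lemma right_aux {m : ℕ} (hm : 2 ≤ m) : rightOK {f3 (m-2)} {f3 (m-1), f3 (m-2)} := by
  have e1 : f3 (m-1) = f3 ((m-2) % 3 + 1) := f3_eq (by omega)
  have e2 : f3 (m-2) = f3 ((m-2) % 3) := f3_eq (by omega)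
  rw [e1, e2]
  rcases (by omega : (m-2) % 3 = 0 ∨ (m-2) % 3 = 1 ∨ (m-2) % 3 = 2) with h | h | h <;>
    rw [h] <;> decide

def pat (m : ℕ) (j : ℕ) : Finset (Fin 3) :=
  if j = 0 then {0, 2} else if j = m - 1 then {f3 (m-1), f3 (m-2)} else {f3 j}

lemma pat_valid {m : ℕ} (hm : 4 ≤ m) : ValidSeq m (pat m) := by
  have hp0 : pat m 0 = {0, 2} := by simp [pat]
  have hp1 : pat m 1 = {f3 1} := by
    rw [pat, if_neg (by omega), if_neg (by omega)]
  refine ⟨?_, ?_, ?_⟩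
  · rw [hp0, hp1]
    decide
  · intro j hj
    have hB : pat m (j+1) = {f3 (j+1)} := by
      rw [pat, if_neg (by omega), if_neg (by omega)]
    have hA : ({f3 j} : Finset (Fin 3)) ⊆ pat m j := by
      by_cases h0 : j = 0
      · subst h0
        rw [hp0]
        decide
      · rw [pat, if_neg h0, if_neg (by omega)]
    have hC : ({f3 (j+2)} : Finset (Fin 3)) ⊆ pat m (j+2) := by
      by_cases hl : j + 2 = m - 1
      · rw [pat, if_neg (by omega), if_pos hl, Finset.singleton_subset_iff, ← hl]
        exact Finset.mem_insert_self _ _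
      · rw [pat, if_neg (by omega), if_neg hl]
    rw [hB]
    exact midOK_mono hA hC (mid_aux j)
  · have hpl : pat m (m-1) = {f3 (m-1), f3 (m-2)} := by
      rw [pat, if_neg (by omega), if_pos rfl]
    have hpl2 : pat m (m-2) = {f3 (m-2)} := by
      rw [pat, if_neg (by omega), if_neg (by omega)]
    rw [hpl, hpl2]
    exact right_aux (by omega)

lemma pat_sum {m : ℕ} (hm : 4 ≤ m) :
    ∑ j ∈ Finset.range m, (pat m j).card = m + 2 := by
  have hcard : ∀ j ∈ Finset.range m,
      (pat m j).card = 1 + (if j = 0 then 1 else 0) + (if j = m-1 then 1 else 0) := by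
    intro j hj
    by_cases h0 : j = 0
    · subst h0
      rw [pat, if_pos rfl, if_pos rfl, if_neg (by omega)]
      decide
    · by_cases hl : j = m - 1
      · subst hl
        rw [pat, if_neg h0, if_pos rfl, if_neg h0, if_pos rfl]
        rw [Finset.card_pair (by
          intro h
          have := congrArg Fin.val h
          simp only [f3, Fin.val_mk] at this
          omega)]
      · rw [pat, if_neg h0, if_neg hl, if_neg h0, if_neg hl, Finset.card_singleton]
  rw [Finset.sum_congr rfl hcard]
  rw [Finset.sum_add_distrib, Finset.sum_add_distrib, Finset.sum_const, Finset.card_range,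
    smul_eq_mul, mul_one]
  rw [Finset.sum_ite_eq' (Finset.range m) 0 (fun _ => 1),
    Finset.sum_ite_eq' (Finset.range m) (m-1) (fun _ => 1)]
  simp only [Finset.mem_range]
  rw [if_pos (by omega), if_pos (by omega)]

def seqA2 : ℕ → Finset (Fin 3) := fun j => if j = 0 then {0,1} else {2}
def seqA3 : ℕ → Finset (Fin 3) := fun j => if j = 1 then {1,2} else {0}

lemma valid2 : ValidSeq 2 seqA2 := by
  refine ⟨by decide, fun j hj => absurd hj (by omega), by decide⟩

lemma valid3 : ValidSeq 3 seqA3 := by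
  refine ⟨by decide, fun j hj => ?_, by decide⟩
  have h0 : j = 0 := by omega
  subst h0
  decide

theorem gamma2_C3 :
    (∀ m : ℕ, 4 ≤ m → gamma2 (cylinder 3 m) = m + 2) ∧
      gamma2 (cylinder 3 2) = 3 ∧ gamma2 (cylinder 3 3) = 4 := by
  refine ⟨fun m hm => ?_, ?_, ?_⟩
  · exact gamma2_eq (by omega) (pat m) (pat_valid hm) (pat_sum hm) (fun b hb => seq_lb hm b hb)
  · refine gamma2_eq (by norm_num) seqA2 valid2 (by decide) (fun b hb => ?_)
    have h := lb2' (b 0) (b 1) hb.1 hb.2.2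
    simp only [Finset.sum_range_succ, Finset.sum_range_zero]
    omega
  · refine gamma2_eq (by norm_num) seqA3 valid3 (by decide) (fun b hb => ?_)
    have h := lb3' (b 0) (b 1) (b 2) hb.1 (hb.2.1 0 (by omega)) hb.2.2
    simp only [Finset.sum_range_succ, Finset.sum_range_zero]
    omega
end

section
/- The 2-domination number of the cylinder C₄ □ P_m equals ⌈(3m+3)/2⌉ for every m ≥ 3. -/
open SimpleGraph

/-!
Lower bound. Read the columns of a 2-dominating set `S` from left to right, remembering the current
column and its *pending* vertices: those outside `S` with only one `S`-neighbour so far, whose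
second one must lie in the next column. With `ψ = max(|column|, 3 - #pending)`, the inequality
`2 |S ∩ first j columns| ≥ 3 j + ψ` holds for `j = 3` and survives every further column (two finite
checks); after the last column nothing is pending, so `ψ ≥ 3` and `2 |S| ≥ 3 m + 3`.

Upper bound. The vertices `(v, j)` with `2 v + j ≡ 0, 3, 6 (mod 8)` wind around the cylinder with
one vertex in each odd and two in each even column, and every other vertex has exactly two
neighbours among them. One extra vertex in each end column makes up for the missing neighbours at
the boundary, for a total of `⌊(3 m + 4) / 2⌋ = ⌈(3 m + 3) / 2⌉`.
-/

theorem Set.ncard_setOf_inter_pair {α : Type*} (f : α → Bool) {x y : α} (hxy : x ≠ y) :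
    ({z | f z = true} ∩ {x, y}).ncard = (f x).toNat + (f y).toNat := by
  rcases Bool.eq_false_or_eq_true (f x) with hx | hx <;>
    rcases Bool.eq_false_or_eq_true (f y) with hy | hy
  all_goals simp [Set.inter_insert_of_mem, Set.inter_insert_of_notMem, hx, hy, Set.ncard_pair hxy]

theorem SimpleGraph.ncard_inter_neighborSet_boxProd {α β : Type*} [Finite α] [Finite β]
    {G : SimpleGraph α} {H : SimpleGraph β} (S : Set (α × β)) (x : α × β) :
    (S ∩ (G □ H).neighborSet x).ncard =
      ({a | (a, x.2) ∈ S} ∩ G.neighborSet x.1).ncard +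
        ({b | (x.1, b) ∈ S} ∩ H.neighborSet x.2).ncard := by
  have hG : S ∩ G.neighborSet x.1 ×ˢ {x.2} =
      (fun a => (a, x.2)) '' ({a | (a, x.2) ∈ S} ∩ G.neighborSet x.1) := by
    ext ⟨a, b⟩
    aesop
  have hH : S ∩ {x.1} ×ˢ H.neighborSet x.2 =
      (fun b => (x.1, b)) '' ({b | (x.1, b) ∈ S} ∩ H.neighborSet x.2) := by
    ext ⟨a, b⟩
    aesop
  have hdisj : Disjoint (G.neighborSet x.1 ×ˢ {x.2}) ({x.1} ×ˢ H.neighborSet x.2) :=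
    Set.disjoint_prod.2 (Or.inl (Set.disjoint_singleton_right.2 G.notMem_neighborSet_self))
  rw [neighborSet_boxProd, Set.inter_union_distrib_left,
    Set.ncard_union_eq (hdisj.mono Set.inter_subset_right Set.inter_subset_right), hG, hH,
    Set.ncard_image_of_injective _ (Prod.mk_left_injective x.2),
    Set.ncard_image_of_injective _ (Prod.mk_right_injective x.1)]

theorem SimpleGraph.ncard_inter_neighborSet_pathGraph {m : ℕ} {f : ℕ → Bool} (h0 : f 0 = false)
    (hm : ∀ j, m < j → f j = false) (i : Fin m) :
    ({k : Fin m | f (k + 1) = true} ∩ (pathGraph m).neighborSet i).ncard =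
      (f i).toNat + (f (i + 2)).toNat := by
  have himage : (fun k : Fin m => k.val + 1) ''
      ({k | f (k + 1) = true} ∩ (pathGraph m).neighborSet i) =
        {j | f j = true} ∩ {i.val, i.val + 2} := by
    ext j
    simp only [pathGraph_adj, Set.mem_image, Set.mem_inter_iff, Set.mem_ofPred_eq,
      mem_neighborSet, Set.mem_insert_iff, Set.mem_singleton_iff]
    constructor
    · rintro ⟨k, ⟨hk, hadj⟩, rfl⟩
      exact ⟨hk, by omega⟩
    · rintro ⟨hj, rfl | rfl⟩
      · obtain ⟨k, hk⟩ : ∃ k, (i : ℕ) = k + 1 :=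
          Nat.exists_eq_succ_of_ne_zero (by rintro h; simp [h, h0] at hj)
        exact ⟨⟨k, by omega⟩, ⟨hk ▸ hj, by simp; omega⟩, hk.symm⟩
      · have hi : (i : ℕ) + 1 < m := by
          by_contra h
          simp [hm (i + 2) (by omega)] at hj
        exact ⟨⟨i + 1, hi⟩, ⟨hj, Or.inl rfl⟩, rfl⟩
  rw [← Set.ncard_image_of_injective _ (fun a b h => Fin.ext (Nat.succ_injective h)), himage,
    Set.ncard_setOf_inter_pair f (by omega)]

namespace C4Cylinder

abbrev Col := Fin 4 → Bool

@[simp] theorem bot_apply (v : Fin 4) : (⊥ : Col) v = false := rfl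

def weight (b : Col) : ℕ := ∑ v, (b v).toNat

def nbrCountLeft (a b : Col) (v : Fin 4) : ℕ :=
  (b (v - 1)).toNat + (b (v + 1)).toNat + (a v).toNat

theorem nbrCountLeft_mono {a a' b b' : Col} (ha : a ≤ a') (hb : b ≤ b') (v : Fin 4) :
    nbrCountLeft a b v ≤ nbrCountLeft a' b' v :=
  add_le_add (add_le_add (Bool.toNat_le_toNat (hb _)) (Bool.toNat_le_toNat (hb _)))
    (Bool.toNat_le_toNat (ha _))

def nbrCount (c : ℕ → Col) (j : ℕ) (v : Fin 4) : ℕ :=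
  nbrCountLeft (c (j - 1)) (c j) v + (c (j + 1) v).toNat

def IsTwoDomColumns (c : ℕ → Col) (m : ℕ) : Prop :=
  ∀ j, 1 ≤ j → j ≤ m → ∀ v, c j v = false → 2 ≤ nbrCount c j v

/- A sequence `c` stands for the set `toSet c m` whose column `i : Fin m` is `c (i + 1)`; the
padding columns `c 0` and `c j`, `j > m`, are the missing neighbours beyond the two ends. -/
def IsPadded (c : ℕ → Col) (m : ℕ) : Prop :=
  c 0 = ⊥ ∧ ∀ j, m < j → c j = ⊥

def toSet (c : ℕ → Col) (m : ℕ) : Set (Fin 4 × Fin m) :=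
  {x | c (x.2 + 1) x.1 = true}

theorem ncard_toSet (c : ℕ → Col) (m : ℕ) :
    (toSet c m).ncard = ∑ i ∈ Finset.range m, weight (c (i + 1)) := by
  classical
  rw [toSet, Set.ncard_eq_toFinset_card', Set.toFinset_ofPred, Finset.card_filter,
    Fintype.sum_prod_type_right, ← Fin.sum_univ_eq_sum_range (fun i => weight (c (i + 1)))]
  refine Finset.sum_congr rfl fun i _ => Finset.sum_congr rfl fun v _ => ?_
  cases c (i + 1) v <;> rfl

theorem ncard_toSet_inter_neighborSet {c : ℕ → Col} {m : ℕ} (hc : IsPadded c m)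
    (x : Fin 4 × Fin m) :
    (toSet c m ∩ (cylinder 4 m).neighborSet x).ncard = nbrCount c (x.2 + 1) x.1 := by
  obtain ⟨v, i⟩ := x
  have hcol : ({a | (a, i) ∈ toSet c m} ∩ {v - 1, v + 1}).ncard =
      (c (i + 1) (v - 1)).toNat + (c (i + 1) (v + 1)).toNat :=
    Set.ncard_setOf_inter_pair (fun a => c (i + 1) a)
      ((by decide : ∀ w : Fin 4, w - 1 ≠ w + 1) v)
  have hrow : ({k | (v, k) ∈ toSet c m} ∩ (pathGraph m).neighborSet i).ncard =
      (c i v).toNat + (c (i + 2) v).toNat :=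
    ncard_inter_neighborSet_pathGraph (f := fun j => c j v) (by simp [hc.1])
      (fun j hj => by simp [hc.2 j hj]) i
  rw [cylinder, ncard_inter_neighborSet_boxProd, cycleGraph_neighborSet, hcol, hrow]
  exact (add_assoc _ _ _).symm

theorem twoDomSet_toSet_iff {c : ℕ → Col} {m : ℕ} (hc : IsPadded c m) :
    TwoDomSet (cylinder 4 m) (toSet c m) ↔ IsTwoDomColumns c m := by
  simp only [TwoDomSet, ncard_toSet_inter_neighborSet hc]
  constructor
  · intro h j hj1 hjm v hv
    have := h (v, ⟨j - 1, by omega⟩) (by simp [toSet, Nat.sub_add_cancel hj1, hv])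
    rwa [Nat.sub_add_cancel hj1] at this
  · rintro h ⟨v, i⟩ hx
    exact h (i + 1) (by omega) i.isLt v (by simpa [toSet] using hx)

theorem exists_isPadded_toSet_eq {m : ℕ} (S : Set (Fin 4 × Fin m)) :
    ∃ c, IsPadded c m ∧ toSet c m = S := by
  classical
  refine ⟨fun j v => decide (∃ i : Fin m, i + 1 = j ∧ (v, i) ∈ S), ⟨?_, fun j hj => ?_⟩, ?_⟩
  · ext v
    simp
  · ext v
    simpa using fun (i : Fin m) hi => absurd hi (by have := i.isLt; omega)
  · ext ⟨v, i⟩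
    simp [toSet, Fin.val_inj]

/-- The current column and its pending vertices. -/
abbrev State := Col × Col

def step (p : State) (b : Col) : State :=
  (b, fun v => !b v && decide (nbrCountLeft p.1 b v = 1))

def Admissible (p : State) (b : Col) : Prop :=
  (∀ v, p.2 v = true → b v = true) ∧ ∀ v, b v = false → 1 ≤ nbrCountLeft p.1 b v

instance (p : State) (b : Col) : Decidable (Admissible p b) := by
  unfold Admissible; infer_instance

-- Every state reached by `step` is consistent; the potential inequality fails for some others.
def Consistent (p : State) : Prop :=
  ∀ v, (p.2 v = true → p.1 v = false) ∧ (p.1 v || p.2 v || p.1 (v - 1) || p.1 (v + 1)) = true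

instance (p : State) : Decidable (Consistent p) := by
  unfold Consistent; infer_instance

def potential (p : State) : ℕ := max (weight p.1) (3 - weight p.2)

theorem consistent_step {p : State} {b : Col} (h : Admissible p b) : Consistent (step p b) := by
  intro v
  have hv := h.2 v
  simp only [step]
  cases hb : b v
  · simp only [hb, nbrCountLeft, forall_const] at hv ⊢
    rcases Bool.eq_false_or_eq_true (b (v - 1)) with h1 | h1 <;>
      rcases Bool.eq_false_or_eq_true (b (v + 1)) with h2 | h2 <;>
      rcases Bool.eq_false_or_eq_true (p.1 v) with h3 | h3 <;> simp_all
  · simp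

set_option maxRecDepth 10000 in
theorem potential_step_add_three_le : ∀ p b, Consistent p → Admissible p b →
    potential (step p b) + 3 ≤ potential p + 2 * weight b := by
  decide

theorem potential_after_three_add_nine_le : ∀ b₁ b₂ b₃ : Col, Admissible (⊥, ⊥) b₁ →
    Admissible (step (⊥, ⊥) b₁) b₂ → Admissible (step (step (⊥, ⊥) b₁) b₂) b₃ →
    potential (step (step (step (⊥, ⊥) b₁) b₂) b₃) + 9 ≤
      2 * (weight b₁ + weight b₂ + weight b₃) := by
  decide

def run (c : ℕ → Col) : ℕ → State
  | 0 => (⊥, ⊥)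
  | j + 1 => step (run c j) (c (j + 1))

theorem run_fst {c : ℕ → Col} (h0 : c 0 = ⊥) : ∀ j, (run c j).1 = c j
  | 0 => h0.symm
  | _ + 1 => rfl

theorem run_succ_snd {c : ℕ → Col} (h0 : c 0 = ⊥) (j : ℕ) (v : Fin 4) :
    (run c (j + 1)).2 v = (!c (j + 1) v && decide (nbrCountLeft (c j) (c (j + 1)) v = 1)) := by
  rw [run, step, run_fst h0]

theorem admissible_run {c : ℕ → Col} {m : ℕ} (hD : IsTwoDomColumns c m) (hc : IsPadded c m)
    {j : ℕ} (hj : j < m) : Admissible (run c j) (c (j + 1)) := by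
  refine ⟨fun v hv => ?_, fun v hv => ?_⟩
  · obtain _ | i := j
    · simp [run] at hv
    · rw [run_succ_snd hc.1] at hv
      simp only [Bool.and_eq_true, Bool.not_eq_eq_eq_not, Bool.not_true, decide_eq_true_eq] at hv
      have := hD (i + 1) (by omega) (by omega) v hv.1
      rw [nbrCount, Nat.add_sub_cancel, hv.2] at this
      revert this
      cases c (i + 1 + 1) v <;> simp
  · have := hD (j + 1) (by omega) (by omega) v hv
    rw [nbrCount, Nat.add_sub_cancel] at this
    rw [run_fst hc.1]
    have := Bool.toNat_le (c (j + 1 + 1) v)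
    omega

theorem run_snd_eq_bot {c : ℕ → Col} {m : ℕ} (hD : IsTwoDomColumns c m) (hc : IsPadded c m)
    (hm : 1 ≤ m) : (run c m).2 = ⊥ := by
  obtain ⟨i, rfl⟩ : ∃ i, m = i + 1 := ⟨m - 1, by omega⟩
  ext v
  rw [run_succ_snd hc.1]
  cases hv : c (i + 1) v
  · have := hD (i + 1) (by omega) le_rfl v hv
    rw [nbrCount, Nat.add_sub_cancel, hc.2 (i + 1 + 1) (by omega)] at this
    simp only [bot_apply, Bool.toNat_false, add_zero] at this
    simp [show nbrCountLeft (c i) (c (i + 1)) v ≠ 1 by omega]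
  · simp

theorem three_mul_add_potential_run_le {c : ℕ → Col} {m : ℕ} (hD : IsTwoDomColumns c m)
    (hc : IsPadded c m) {j : ℕ} (h3 : 3 ≤ j) (hjm : j ≤ m) :
    3 * j + potential (run c j) ≤ 2 * ∑ i ∈ Finset.range j, weight (c (i + 1)) := by
  induction j, h3 using Nat.le_induction with
  | base =>
    have := potential_after_three_add_nine_le (c 1) (c 2) (c 3)
      (admissible_run hD hc (j := 0) (by omega)) (admissible_run hD hc (j := 1) (by omega))
      (admissible_run hD hc (j := 2) (by omega))
    simp only [Finset.sum_range_succ, Finset.sum_range_zero, run, Nat.reduceAdd]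
    omega
  | succ j hj ih =>
    have hcons : Consistent (run c j) := by
      obtain ⟨i, rfl⟩ : ∃ i, j = i + 1 := ⟨j - 1, by omega⟩
      exact consistent_step (admissible_run hD hc (by omega))
    have := potential_step_add_three_le _ _ hcons (admissible_run hD hc hjm)
    have := ih (by omega)
    rw [Finset.sum_range_succ, run]
    omega

theorem three_mul_add_three_le {c : ℕ → Col} {m : ℕ} (hD : IsTwoDomColumns c m)
    (hc : IsPadded c m) (hm : 3 ≤ m) :
    3 * m + 3 ≤ 2 * ∑ i ∈ Finset.range m, weight (c (i + 1)) := by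
  have hlast : 3 ≤ potential (run c m) := by
    simp [potential, run_snd_eq_bot hD hc (by omega), weight]
  have := three_mul_add_potential_run_le hD hc hm le_rfl
  omega

theorem three_mul_add_three_le_two_mul_ncard {m : ℕ} (hm : 3 ≤ m) {S : Set (Fin 4 × Fin m)}
    (hS : TwoDomSet (cylinder 4 m) S) : 3 * m + 3 ≤ 2 * S.ncard := by
  obtain ⟨c, hc, rfl⟩ := exists_isPadded_toSet_eq S
  rw [ncard_toSet]
  exact three_mul_add_three_le ((twoDomSet_toSet_iff hc).1 hS) hc hm

def helix (r : ZMod 8) : Col :=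
  fun v => decide (2 * ((v : ℕ) : ZMod 8) + r ∈ ({0, 3, 6} : Finset (ZMod 8)))

def helixEnd (r : ZMod 8) : Col :=
  fun v => decide (2 * ((v : ℕ) : ZMod 8) + r ∈ ({0, 2, 3, 6, 7} : Finset (ZMod 8)))

theorem helix_le_helixEnd (r : ZMod 8) : helix r ≤ helixEnd r :=
  fun v => (by decide : ∀ r v, helix r v ≤ helixEnd r v) r v

theorem helix_dominates : ∀ r v, helix r v = false →
    2 ≤ nbrCountLeft (helix (r - 1)) (helix r) v + (helix (r + 1) v).toNat := by
  decide

theorem helixEnd_dominates_first : ∀ v, helixEnd 1 v = false →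
    2 ≤ nbrCountLeft ⊥ (helixEnd 1) v + (helix 2 v).toNat := by
  decide

theorem helixEnd_dominates_last : ∀ r v, helixEnd r v = false →
    2 ≤ nbrCountLeft (helix (r - 1)) (helixEnd r) v := by
  decide

theorem weight_helixEnd : ∀ r, weight (helixEnd r) = weight (helix r) + 1 := by
  decide

theorem weight_helix_natCast (j : ℕ) : weight (helix j) = 2 - j % 2 := by
  have h : ∀ r : Fin 8, weight (helix (r : ℕ)) = 2 - r % 2 := by decide
  simpa [ZMod.natCast_mod, Nat.mod_mod_of_dvd j (by norm_num : 2 ∣ 8)] using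
    h ⟨j % 8, Nat.mod_lt _ (by norm_num)⟩

def helixColumns (m j : ℕ) : Col :=
  if j = 0 ∨ m < j then ⊥ else if j = 1 ∨ j = m then helixEnd j else helix j

theorem isPadded_helixColumns (m : ℕ) : IsPadded (helixColumns m) m :=
  ⟨by simp [helixColumns], fun j hj => by simp [helixColumns, hj]⟩

theorem helixColumns_one {m : ℕ} (hm : 1 ≤ m) : helixColumns m 1 = helixEnd 1 := by
  rw [helixColumns, if_neg (by omega), if_pos (Or.inl rfl), Nat.cast_one]

theorem helixColumns_self {m : ℕ} (hm : 1 ≤ m) : helixColumns m m = helixEnd m := by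
  rw [helixColumns, if_neg (by omega), if_pos (Or.inr rfl)]

theorem helixColumns_of_lt {m j : ℕ} (h1 : 1 < j) (h2 : j < m) : helixColumns m j = helix j := by
  rw [helixColumns, if_neg (by omega), if_neg (by omega)]

theorem helix_le_helixColumns {m j : ℕ} (h1 : 1 ≤ j) (h2 : j ≤ m) :
    helix j ≤ helixColumns m j := by
  unfold helixColumns
  split_ifs
  · omega
  · exact helix_le_helixEnd _
  · exact le_rfl

theorem isTwoDomColumns_helixColumns {m : ℕ} (hm : 2 ≤ m) :
    IsTwoDomColumns (helixColumns m) m := by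
  intro j hj1 hjm v hv
  unfold nbrCount
  have hnext (h : j < m) : helix ((j : ZMod 8) + 1) ≤ helixColumns m (j + 1) := by
    simpa using helix_le_helixColumns (m := m) (j := j + 1) (by omega) h
  obtain rfl | hj1 := hj1.eq_or_lt
  · rw [helixColumns_one (by omega)] at hv ⊢
    calc 2 ≤ nbrCountLeft ⊥ (helixEnd 1) v + (helix 2 v).toNat := helixEnd_dominates_first v hv
      _ ≤ _ := by
        rw [(isPadded_helixColumns m).1]
        gcongr
        exact Bool.toNat_le_toNat (by simpa [one_add_one_eq_two] using hnext (by omega) v)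
  have hprev : helix ((j : ZMod 8) - 1) ≤ helixColumns m (j - 1) := by
    simpa [Nat.cast_sub hj1.le] using
      helix_le_helixColumns (m := m) (j := j - 1) (by omega) (by omega)
  obtain rfl | hjm := hjm.eq_or_lt
  · rw [helixColumns_self (by omega)] at hv ⊢
    calc 2 ≤ nbrCountLeft (helix (j - 1)) (helixEnd j) v := helixEnd_dominates_last _ v hv
      _ ≤ _ := le_add_right (nbrCountLeft_mono hprev le_rfl v)
  · rw [helixColumns_of_lt hj1 hjm] at hv ⊢
    calc 2 ≤ nbrCountLeft (helix (j - 1)) (helix j) v + (helix (j + 1) v).toNat :=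
          helix_dominates _ v hv
      _ ≤ _ := add_le_add (nbrCountLeft_mono hprev le_rfl v)
          (Bool.toNat_le_toNat (hnext hjm v))

theorem sum_weight_helixColumns {m : ℕ} (hm : 2 ≤ m) :
    ∑ i ∈ Finset.range m, weight (helixColumns m (i + 1)) = (3 * m + 4) / 2 := by
  obtain ⟨n, rfl⟩ : ∃ n, m = n + 2 := ⟨m - 2, by omega⟩
  have hsum (k : ℕ) : ∑ i ∈ Finset.range k, (2 - (i + 2) % 2) = k + (k + 1) / 2 := by
    induction k with
    | zero => rfl
    | succ k ih => rw [Finset.sum_range_succ, ih]; omega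
  have hmid : ∀ i ∈ Finset.range n,
      weight (helixColumns (n + 2) (i + 1 + 1)) = 2 - (i + 2) % 2 := by
    intro i hi
    rw [helixColumns_of_lt (by omega) (by simp at hi; omega), weight_helix_natCast]
  have hfirst : weight (helixColumns (n + 2) 1) = 2 := by
    rw [helixColumns_one (by omega), weight_helixEnd]
    decide
  have hlast : weight (helixColumns (n + 2) (n + 2)) = 3 - n % 2 := by
    rw [helixColumns_self (by omega), weight_helixEnd, weight_helix_natCast]
    omega
  rw [Finset.sum_range_succ, Finset.sum_range_succ', Finset.sum_congr rfl hmid, hsum, hfirst,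
    hlast]
  rcases Nat.mod_two_eq_zero_or_one n with h | h <;> rw [h] <;> omega

theorem twoDomSet_toSet_helixColumns {m : ℕ} (hm : 2 ≤ m) :
    TwoDomSet (cylinder 4 m) (toSet (helixColumns m) m) :=
  (twoDomSet_toSet_iff (isPadded_helixColumns m)).2 (isTwoDomColumns_helixColumns hm)

theorem ncard_toSet_helixColumns {m : ℕ} (hm : 2 ≤ m) :
    (toSet (helixColumns m) m).ncard = (3 * m + 4) / 2 := by
  rw [ncard_toSet, sum_weight_helixColumns hm]

theorem natCast_three_mul_add_four_div_two_eq_ceil (m : ℕ) :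
    (((3 * m + 4) / 2 : ℕ) : ℤ) = ⌈(3 * (m : ℚ) + 3) / 2⌉ := by
  rw [eq_comm, Int.ceil_eq_iff]
  obtain ⟨k, rfl | rfl⟩ := Nat.even_or_odd' m
  · rw [show (3 * (2 * k) + 4) / 2 = 3 * k + 2 by omega]
    push_cast
    constructor <;> linarith
  · rw [show (3 * (2 * k + 1) + 4) / 2 = 3 * k + 3 by omega]
    push_cast
    constructor <;> linarith

end C4Cylinder

theorem gamma2_C4 (m : ℕ) (hm : 3 ≤ m) :
    (gamma2 (cylinder 4 m) : ℤ) = ⌈(3 * (m : ℚ) + 3) / 2⌉ := by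
  have hleast : IsLeast
      {k | ∃ S : Set (Fin 4 × Fin m), TwoDomSet (cylinder 4 m) S ∧ S.ncard = k}
      ((3 * m + 4) / 2) := by
    refine ⟨⟨_, C4Cylinder.twoDomSet_toSet_helixColumns (by omega),
      C4Cylinder.ncard_toSet_helixColumns (by omega)⟩, ?_⟩
    rintro _ ⟨S, hS, rfl⟩
    have := C4Cylinder.three_mul_add_three_le_two_mul_ncard hm hS
    omega
  rw [gamma2, hleast.csInf_eq]
  exact C4Cylinder.natCast_three_mul_add_four_div_two_eq_ceil m
end

section
/- The 2-domination number of the cylinder C_n □ P₂ equals n for every n ≥ 3. -/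
open SimpleGraph

/-!
Lower bound: if a column `{i} × Fin 2` misses a 2-dominating set `S`, each of its two vertices
has only its two horizontal neighbours left to dominate it, so both neighbouring columns are full.
Hence any two consecutive columns contain at least two vertices of `S`, and summing over the `n`
pairs of consecutive columns gives `2 |S| ≥ 2 n`.
Upper bound: taking in column `i` the vertex of row `i mod 2` gives a 2-dominating set of size `n`;
a vertex outside it is dominated by its vertical neighbour and by the neighbour in an adjacent
column of the other parity (column `1` for column `0`, column `i - 1` otherwise).
-/

theorem Set.ncard_eq_sum_ncard_section {α β : Type*} [Fintype α] [Finite β] (S : Set (α × β)) :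
    S.ncard = ∑ a, {b | (a, b) ∈ S}.ncard := by
  rw [← Nat.card_coe_set_eq,
    Nat.card_congr (Equiv.subtypeProdEquivSigmaSubtype fun a b => (a, b) ∈ S), Nat.card_sigma]
  rfl

theorem Set.mem_and_mem_of_subset_pair_of_two_le_ncard {α : Type*} {s : Set α} {a b : α}
    (hs : s ⊆ {a, b}) (h : 2 ≤ s.ncard) : a ∈ s ∧ b ∈ s := by
  have hpair : ({a, b} : Set α).ncard ≤ s.ncard :=
    (Set.ncard_insert_le a {b}).trans (by rwa [Set.ncard_singleton])
  rw [Set.eq_of_subset_of_ncard_le hs hpair]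
  exact ⟨Set.mem_insert a {b}, Set.mem_insert_of_mem a rfl⟩

theorem Fintype.card_le_sum_of_two_le_add_shift {G : Type*} [AddGroup G] [Fintype G] (c : G)
    (f : G → ℕ) (h : ∀ g, 2 ≤ f g + f (g + c)) : Fintype.card G ≤ ∑ g, f g := by
  have hdouble : 2 * Fintype.card G ≤ 2 * ∑ g, f g :=
    calc 2 * Fintype.card G = ∑ _g : G, 2 := by simp [mul_comm]
      _ ≤ ∑ g, (f g + f (g + c)) := Finset.sum_le_sum fun g _ => h g
      _ = ∑ g, f g + ∑ g, f (g + c) := Finset.sum_add_distrib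
      _ = 2 * ∑ g, f g := by
          rw [Fintype.sum_equiv (Equiv.addRight c) (fun g => f (g + c)) f fun _ => rfl]; ring
  omega

theorem gamma2_eq_of_forall_le_ncard {V : Type*} {G : SimpleGraph V} {k : ℕ}
    (hex : ∃ S, TwoDomSet G S ∧ S.ncard = k) (hle : ∀ S, TwoDomSet G S → k ≤ S.ncard) :
    gamma2 G = k :=
  le_antisymm (Nat.sInf_le hex) (le_csInf ⟨k, hex⟩ fun _ ⟨S, hS, hcard⟩ => hcard ▸ hle S hS)

theorem cycleGraph_exists_adj_parity_ne {n : ℕ} (i : Fin (n + 2)) :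
    ∃ i', (cycleGraph (n + 2)).Adj i i' ∧ Fin.ofNat 2 i' ≠ Fin.ofNat 2 i := by
  rcases Fin.eq_zero_or_eq_succ i with rfl | ⟨k, rfl⟩
  · exact ⟨1, by simp [cycleGraph_adj], by simp⟩
  · refine ⟨k.castSucc, Or.inl ?_, ?_⟩
    · rw [Fin.ext_iff, Fin.coe_sub_iff_le.2 (Fin.castSucc_le_succ k)]
      simp
    · simp only [ne_eq, Fin.ext_iff, Fin.val_ofNat, Fin.val_castSucc, Fin.val_succ]
      omega

def zigzag (n : ℕ) : Set (Fin n × Fin 2) :=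
  Set.range fun i => (i, Fin.ofNat 2 i)

theorem ncard_zigzag (n : ℕ) : (zigzag n).ncard = n := by
  rw [zigzag, Set.ncard_range_of_injective fun _ _ h => congrArg Prod.fst h, Nat.card_fin]

theorem twoDomSet_cylinder_zigzag (n : ℕ) : TwoDomSet (cylinder (n + 2) 2) (zigzag (n + 2)) := by
  rintro ⟨i, j⟩ hij
  have hj : j ≠ Fin.ofNat 2 i := fun h => hij ⟨i, by rw [h]⟩
  obtain ⟨i', hadj, hpar⟩ := cycleGraph_exists_adj_parity_ne i
  have hj' : j = Fin.ofNat 2 i' := by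
    rw [ne_eq, Fin.ext_iff] at hj hpar
    exact Fin.ext (by omega)
  refine (Set.one_lt_ncard (Set.toFinite _)).2
    ⟨(i, Fin.ofNat 2 i), ⟨⟨i, rfl⟩, ?_⟩, (i', Fin.ofNat 2 i'), ⟨⟨i', rfl⟩, ?_⟩,
      fun h => hadj.ne (congrArg Prod.fst h)⟩
  · exact boxProd_adj_right.2 (by simpa [pathGraph_two_eq_top] using hj)
  · exact hj' ▸ boxProd_adj_left.2 hadj

section LowerBound

variable {n : ℕ} {S : Set (Fin (n + 2) × Fin 2)}

theorem TwoDomSet.mem_of_column_disjoint (hS : TwoDomSet (cylinder (n + 2) 2) S)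
    {i : Fin (n + 2)} (hi : ∀ j, (i, j) ∉ S) (j : Fin 2) : (i - 1, j) ∈ S ∧ (i + 1, j) ∈ S := by
  have hsub : S ∩ (cylinder (n + 2) 2).neighborSet (i, j) ⊆ {(i - 1, j), (i + 1, j)} := by
    rintro ⟨i', j'⟩ ⟨hmem, hadj⟩
    rw [cylinder, neighborSet_boxProd, cycleGraph_neighborSet] at hadj
    rcases hadj with ⟨hi', rfl : j' = j⟩ | ⟨rfl : i' = i, -⟩
    · rcases hi' with rfl | rfl <;> simp
    · exact absurd hmem (hi j')
  exact (Set.mem_and_mem_of_subset_pair_of_two_le_ncard hsub (hS _ (hi j))).imp (·.1) (·.1)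

theorem TwoDomSet.two_le_ncard_column_add (hS : TwoDomSet (cylinder (n + 2) 2) S)
    (i : Fin (n + 2)) : 2 ≤ {j | (i, j) ∈ S}.ncard + {j | (i + 1, j) ∈ S}.ncard := by
  have hfull : ∀ i', (∀ j, (i', j) ∈ S) → {j | (i', j) ∈ S}.ncard = 2 := fun i' h => by
    simp [h]
  have hpos : ∀ i', (∃ j, (i', j) ∈ S) → 0 < {j | (i', j) ∈ S}.ncard := fun i' h =>
    (Set.ncard_pos (Set.toFinite _)).2 h
  by_cases hi : ∀ j, (i, j) ∉ S
  · have := hfull (i + 1) fun j => (hS.mem_of_column_disjoint hi j).2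
    omega
  by_cases hi' : ∀ j, (i + 1, j) ∉ S
  · have := hfull i fun j => by simpa using (hS.mem_of_column_disjoint hi' j).1
    omega
  push Not at hi hi'
  have := hpos i hi
  have := hpos (i + 1) hi'
  omega

theorem TwoDomSet.le_ncard_cylinder (hS : TwoDomSet (cylinder (n + 2) 2) S) :
    n + 2 ≤ S.ncard := by
  simpa [← Set.ncard_eq_sum_ncard_section] using
    Fintype.card_le_sum_of_two_le_add_shift 1 _ hS.two_le_ncard_column_add

end LowerBound

theorem gamma2_prism (n : ℕ) (hn : 3 ≤ n) : gamma2 (cylinder n 2) = n := by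
  obtain ⟨n, rfl⟩ : ∃ m, n = m + 2 := ⟨n - 2, by omega⟩
  exact gamma2_eq_of_forall_le_ncard ⟨_, twoDomSet_cylinder_zigzag n, ncard_zigzag _⟩
    fun _ hS => hS.le_ncard_cylinder
end

section
/- If R is a quasi-2-dominating set of C_n □ P_m (m ≥ 3), then the restriction R' of R to the first m−1 columns is a quasi-2-dominating set of C_n □ P_{m−1}. -/
open SimpleGraph

def Quasi2DomSet (n m : ℕ) (R : Set (Fin n × Fin m)) : Prop :=
  ∀ v : Fin n × Fin m, v ∉ R →
    (v.2.val = m - 1 → 1 ≤ (R ∩ (cylinder n m).neighborSet v).ncard) ∧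
    (v.2.val ≠ m - 1 → 2 ≤ (R ∩ (cylinder n m).neighborSet v).ncard)

theorem quasi_restriction (n m : ℕ) (hn : 3 ≤ n) (hm : 2 ≤ m)
    (R : Set (Fin n × Fin (m + 1))) (hR : Quasi2DomSet n (m + 1) R) :
    Quasi2DomSet n m {v : Fin n × Fin m | (v.1, v.2.castSucc) ∈ R} := by
  intro v hv
  set w : Fin n × Fin (m + 1) := (v.1, v.2.castSucc) with hw
  have hwval : w.2.val = v.2.val := Fin.coe_castSucc v.2
  have hwR : w ∉ R := hv
  have hv2 : v.2.val < m := v.2.isLt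
  have hcard : 2 ≤ (R ∩ (cylinder n (m+1)).neighborSet w).ncard := by
    refine (hR w hwR).2 ?_
    omega
  set f : Fin n × Fin m → Fin n × Fin (m+1) := fun u => (u.1, u.2.castSucc) with hf
  set S := {u : Fin n × Fin m | (u.1, u.2.castSucc) ∈ R} ∩ (cylinder n m).neighborSet v with hS
  have hinj : Set.InjOn f S := by
    intro a _ b _ hab
    simp only [hf, Prod.mk.injEq] at hab
    exact Prod.ext hab.1 (Fin.castSucc_injective m hab.2)
  have hcard_img : (f '' S).ncard = S.ncard := Set.ncard_image_of_injOn hinj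
  have himg : ∀ u ∈ R ∩ (cylinder n (m+1)).neighborSet w, u.2.val ≠ m → u ∈ f '' S := by
    rintro ⟨a, b⟩ ⟨huR, hadj⟩ hbm
    have hbm' : b.val ≠ m := hbm
    have hb : b.val < m := by have := b.isLt; omega
    refine ⟨(a, ⟨b.val, hb⟩), ⟨?_, ?_⟩, ?_⟩
    · show (a, Fin.castSucc ⟨b.val, hb⟩) ∈ R
      have hcast : Fin.castSucc (⟨b.val, hb⟩ : Fin m) = b := by ext; simp
      rw [hcast]; exact huR
    · show (cylinder n m).Adj v (a, ⟨b.val, hb⟩)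
      simp only [cylinder, boxProd_adj] at hadj ⊢
      rcases hadj with ⟨hc, heq⟩ | ⟨hp, heq⟩
      · left
        refine ⟨hc, ?_⟩
        have hval : w.2.val = b.val := congrArg Fin.val heq
        ext
        show v.2.val = b.val
        omega
      · right
        refine ⟨?_, heq⟩
        rw [pathGraph_adj] at hp ⊢
        have hp' : w.2.val + 1 = b.val ∨ b.val + 1 = w.2.val := hp
        show v.2.val + 1 = b.val ∨ b.val + 1 = v.2.val
        omega
    · simp only [hf]
      ext <;> simp
  rcases Nat.lt_or_ge v.2.val (m-1) with hlt | hge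
  · have hsub : R ∩ (cylinder n (m+1)).neighborSet w ⊆ f '' S := by
      rintro ⟨a, b⟩ hu
      refine himg _ hu ?_
      intro hbm
      have hbm' : b.val = m := hbm
      obtain ⟨_, hadj⟩ := hu
      simp only [cylinder, boxProd_adj] at hadj
      rcases hadj with ⟨_, heq⟩ | ⟨hp, _⟩
      · have hval : w.2.val = b.val := congrArg Fin.val heq
        omega
      · rw [pathGraph_adj] at hp
        have hp' : w.2.val + 1 = b.val ∨ b.val + 1 = w.2.val := hp
        omega
    constructor
    · intro h; omega
    · intro _
      calc 2 ≤ (R ∩ (cylinder n (m+1)).neighborSet w).ncard := hcard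
        _ ≤ (f '' S).ncard := Set.ncard_le_ncard hsub (Set.toFinite _)
        _ = S.ncard := hcard_img
  · have hsub : R ∩ (cylinder n (m+1)).neighborSet w ⊆ insert (v.1, Fin.last m) (f '' S) := by
      rintro ⟨a, b⟩ hu
      by_cases hbm : b.val = m
      · left
        obtain ⟨_, hadj⟩ := hu
        simp only [cylinder, boxProd_adj] at hadj
        rcases hadj with ⟨_, heq⟩ | ⟨hp, heq⟩
        · exfalso
          have hval : w.2.val = b.val := congrArg Fin.val heq
          omega
        · have hbl : b = Fin.last m := by ext; simpa using hbm
          have ha : a = v.1 := heq.symm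
          rw [hbl, ha]
      · right; exact himg _ hu hbm
    have h1 : (R ∩ (cylinder n (m+1)).neighborSet w).ncard ≤ S.ncard + 1 := by
      calc (R ∩ (cylinder n (m+1)).neighborSet w).ncard
          ≤ (insert (v.1, Fin.last m) (f '' S)).ncard := Set.ncard_le_ncard hsub (Set.toFinite _)
        _ ≤ (f '' S).ncard + 1 := Set.ncard_insert_le _ _
        _ = S.ncard + 1 := by rw [hcard_img]
    constructor
    · intro _; omega
    · intro hne; omega
end

section
/- If m ≡ 0 (mod 3) and n is divisible by 3, then γ₂(C_n □ P_m) ≤ n(m+2)/3. In particular, for n = 3 and m ≥ 4, γ₂(C₃ □ P_m) ≤ m + 2. -/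
open SimpleGraph

/-!
The diagonals `i ≡ j (mod 3)` of the cylinder already 2-dominate every interior vertex: when
`3 ∣ n`, residues mod 3 are compatible with the cyclic coordinate, so a vertex with `i ≡ j + 1` has
the diagonal neighbours `(i - 1, j)` and `(i, j + 1)`, and one with `i ≡ j + 2` has `(i + 1, j)` and
`(i, j - 1)`. Only in the first and last row is one of these neighbours missing; adding the
affected `n / 3` vertices of each of these two rows gives a 2-dominating set of size
`m * (n / 3) + 2 * (n / 3) = n * (m + 2) / 3`.
-/

open Finset

theorem Fin.val_add_mod_of_dvd {n d : ℕ} (hd : d ∣ n) (i j : Fin n) :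
    (i + j).val % d = (i.val + j.val) % d := by
  rw [Fin.val_add, Nat.mod_mod_of_dvd _ hd]

theorem Fin.card_filter_val_mod_eq {n d : ℕ} (hd : d ∣ n) (hd₀ : 0 < d) (r : ℕ) :
    #{i : Fin n | i.val % d = r % d} = n / d := by
  have hcount := Nat.count_modEq_card n hd₀ r
  simp only [Nat.count_eq_card_filter_range, Nat.mod_eq_zero_of_dvd hd, Nat.not_lt_zero,
    if_false, add_zero] at hcount
  rw [card_filter, Fin.sum_univ_eq_sum_range (fun i => if i % d = r % d then 1 else 0),
    ← card_filter, ← hcount]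
  rfl

theorem gamma2_le_ncard {V : Type*} {G : SimpleGraph V} {S : Set V} (hS : TwoDomSet G S) :
    gamma2 G ≤ S.ncard :=
  Nat.sInf_le ⟨S, hS, rfl⟩

theorem two_le_ncard_inter_neighborSet {V : Type*} {G : SimpleGraph V} {S : Set V}
    (hS : S.Finite) {v a b : V} (hab : a ≠ b) (ha : a ∈ S) (hb : b ∈ S) (hva : G.Adj v a)
    (hvb : G.Adj v b) : 2 ≤ (S ∩ G.neighborSet v).ncard :=
  (Set.one_lt_ncard (hS.inter_of_left _)).mpr ⟨a, ⟨ha, hva⟩, b, ⟨hb, hvb⟩, hab⟩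

def cylinderDiagonalSet (n m : ℕ) : Finset (Fin n × Fin m) :=
  {p | p.1.val % 3 = p.2.val % 3 ∨ (p.2.val = 0 ∧ p.1.val % 3 = 2) ∨
    (p.2.val + 1 = m ∧ p.1.val % 3 = m % 3)}

theorem mem_cylinderDiagonalSet {n m : ℕ} {i : Fin n} {j : Fin m} :
    (i, j) ∈ cylinderDiagonalSet n m ↔ i.val % 3 = j.val % 3 ∨ (j.val = 0 ∧ i.val % 3 = 2) ∨
      (j.val + 1 = m ∧ i.val % 3 = m % 3) := by
  simp [cylinderDiagonalSet]

theorem cylinder_adj_sub_one {k m : ℕ} (i : Fin (k + 2)) (j : Fin m) :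
    (cylinder (k + 2) m).Adj (i, j) (i - 1, j) :=
  boxProd_adj_left.mpr (cycleGraph_adj.mpr (.inl (sub_sub_cancel i 1)))

theorem cylinder_adj_add_one {k m : ℕ} (i : Fin (k + 2)) (j : Fin m) :
    (cylinder (k + 2) m).Adj (i, j) (i + 1, j) :=
  boxProd_adj_left.mpr (cycleGraph_adj.mpr (.inr (add_sub_cancel_left i 1)))

theorem cylinder_adj_of_val_add_one_eq {n m : ℕ} (i : Fin n) {j j' : Fin m}
    (h : j.val + 1 = j'.val ∨ j'.val + 1 = j.val) : (cylinder n m).Adj (i, j) (i, j') :=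
  boxProd_adj_right.mpr (pathGraph_adj.mpr h)

theorem twoDomSet_cylinderDiagonalSet {n m : ℕ} (hn : 3 ∣ n) :
    TwoDomSet (cylinder n m) (cylinderDiagonalSet n m) := by
  obtain _ | _ | k := n
  · exact fun v => v.1.elim0
  · omega
  rintro ⟨i, j⟩ hij
  rw [mem_coe, mem_cylinderDiagonalSet] at hij
  have hpred := Fin.val_add_mod_of_dvd hn (i - 1) 1
  have hsucc := Fin.val_add_mod_of_dvd hn i 1
  rw [sub_add_cancel, Fin.val_one] at hpred
  rw [Fin.val_one] at hsucc
  have hS := (cylinderDiagonalSet (k + 2) m : Set (Fin (k + 2) × Fin m)).toFinite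
  by_cases hdiag : i.val % 3 = (j.val + 1) % 3
  · have hj : j.val + 1 < m := by omega
    have hprev : (i - 1).val % 3 = j.val % 3 := by omega
    refine two_le_ncard_inter_neighborSet hS (a := (i - 1, j)) (b := (i, ⟨j.val + 1, hj⟩))
      (by simp [Fin.ext_iff]) (mem_cylinderDiagonalSet.mpr (.inl hprev))
      (mem_cylinderDiagonalSet.mpr (.inl hdiag)) (cylinder_adj_sub_one i j)
      (cylinder_adj_of_val_add_one_eq i (.inl rfl))
  · have hj : 0 < j.val := by omega
    have hnext : (i + 1).val % 3 = j.val % 3 := by omega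
    refine two_le_ncard_inter_neighborSet hS (a := (i + 1, j)) (b := (i, ⟨j.val - 1, by omega⟩))
      (by simp [Fin.ext_iff]) (mem_cylinderDiagonalSet.mpr (.inl hnext))
      (mem_cylinderDiagonalSet.mpr (.inl (by simp only; omega))) (cylinder_adj_add_one i j)
      (cylinder_adj_of_val_add_one_eq i (.inr (by simp only; omega)))

theorem card_cylinderDiagonalSet_le {n : ℕ} (m : ℕ) (hn : 3 ∣ n) :
    #(cylinderDiagonalSet n m) ≤ n * (m + 2) / 3 := by
  let R (r : ℕ) : Finset (Fin n) := {i | i.val % 3 = r % 3}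
  let D : Finset (Fin n × Fin m) := {p | p.1.val % 3 = p.2.val % 3}
  let F : Finset (Fin m) := {j | j.val = 0}
  let L : Finset (Fin m) := {j | j.val + 1 = m}
  have hR (r : ℕ) : #(R r) = n / 3 := Fin.card_filter_val_mod_eq hn (by norm_num) r
  have hD : #D = m * (n / 3) := by
    rw [card_filter, Fintype.sum_prod_type_right]
    simp only [← card_filter]
    change ∑ j : Fin m, #(R j) = _
    simp [hR]
  have hrow (r : ℕ) {s : Finset (Fin m)} (hs : #s ≤ 1) : #(R r ×ˢ s) ≤ n / 3 := by
    rw [card_product, hR]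
    exact mul_le_of_le_one_right (Nat.zero_le _) hs
  have hF : #F ≤ 1 := card_le_one.mpr fun a ha b hb => by
    simp only [F, mem_filter] at ha hb; omega
  have hL : #L ≤ 1 := card_le_one.mpr fun a ha b hb => by
    simp only [L, mem_filter] at ha hb; omega
  have hsub : cylinderDiagonalSet n m ⊆ D ∪ (R 2 ×ˢ F ∪ R m ×ˢ L) := by
    rintro ⟨i, j⟩
    simp only [mem_cylinderDiagonalSet, mem_union, mem_product, mem_filter, mem_univ, true_and, D,
      R, F, L]
    omega
  calc #(cylinderDiagonalSet n m)
      ≤ m * (n / 3) + (n / 3 + n / 3) := by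
        refine (card_le_card hsub).trans ((card_union_le _ _).trans ?_)
        rw [hD]
        gcongr
        exact (card_union_le _ _).trans (add_le_add (hrow 2 hF) (hrow m hL))
    _ = n * (m + 2) / 3 := by
        obtain ⟨q, rfl⟩ := hn
        rw [Nat.mul_div_cancel_left _ (by norm_num), mul_assoc,
          Nat.mul_div_cancel_left _ (by norm_num)]
        ring

theorem gamma2_cylinder_le {n : ℕ} (m : ℕ) (hn : 3 ∣ n) :
    gamma2 (cylinder n m) ≤ n * (m + 2) / 3 :=
  calc gamma2 (cylinder n m)
      ≤ (cylinderDiagonalSet n m : Set (Fin n × Fin m)).ncard :=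
        gamma2_le_ncard (twoDomSet_cylinderDiagonalSet hn)
    _ = #(cylinderDiagonalSet n m) := Set.ncard_coe_finset _
    _ ≤ n * (m + 2) / 3 := card_cylinderDiagonalSet_le m hn

theorem gamma2_upper_bound :
    (∀ n m : ℕ, 3 ≤ n → 2 ≤ m → 3 ∣ n → 3 ∣ m →
        gamma2 (cylinder n m) ≤ n * (m + 2) / 3) ∧
      ∀ m : ℕ, 4 ≤ m → gamma2 (cylinder 3 m) ≤ m + 2 :=
  ⟨fun _ m _ _ hn _ => gamma2_cylinder_le m hn,
    fun m _ => by simpa using gamma2_cylinder_le m (dvd_refl 3)⟩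
end
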